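/- arXiv:1701.00954 — 6 statements merged into one kernel-verified Lean document; each statement's English description precedes it below -/
import Mathlib

section
/- Let X be a topological space with no compact component, and for each component C of X fix a maximal collection D(C) of closed subsets of C with the finite intersection property and empty intersection. Let Y = X ∪ {p} with p ∉ X, and declare a subset U ⊆ Y open iff either (I) p ∉ U and U is open in X, or (II) p ∈ U, U ∩ X is open in X, and for every component C of X, U contains some element of D(C). Then this collection of sets forms a topology on Y. -/
open Set

/-- A collection of sets has the finite intersection property if every finite
subcollection has nonempty intersection. -/
def FIP {α : Type*} (D : Set (Set α)) : Prop :=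
  ∀ F ⊆ D, F.Finite → (⋂₀ F).Nonempty

/-- `D` is a maximal collection of closed subsets of `C` with the finite
intersection property and empty intersection. -/
def IsMaxFIPFamily {X : Type*} [TopologicalSpace X] (C : Set X) (D : Set (Set X)) : Prop :=
  (∀ A ∈ D, IsClosed A ∧ A ⊆ C) ∧ FIP D ∧ ⋂₀ D = ∅ ∧
    ∀ D' : Set (Set X), (∀ A ∈ D', IsClosed A ∧ A ⊆ C) → FIP D' → ⋂₀ D' = ∅ →
      D ⊆ D' → D' = D

/-- The open sets of the one-point connectification `Y = X ∪ {p}`, modelled as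
`Option X` with `p = none`: (I) sets not containing `none` whose trace on `X` is
open in `X`, and (II) sets containing `none` whose trace on `X` is open in `X`
and which contain (the image of) a member of `𝒟 C` for every connected
component `C` of `X`. -/
def OPOpens {X : Type*} [TopologicalSpace X] (𝒟 : Set X → Set (Set X)) :
    Set (Set (Option X)) :=
  {U | (none ∉ U ∧ IsOpen (some ⁻¹' U)) ∨
       (none ∈ U ∧ IsOpen (some ⁻¹' U) ∧
         ∀ x : X, ∃ A ∈ 𝒟 (connectedComponent x), some '' A ⊆ U)}

/-!
The only point needing an idea is that sets of type (II) are closed under binary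
intersections. For this, each `𝒟 C` must be closed under binary intersections: adjoining
`A ∩ B` to `𝒟 C` keeps its members closed subsets of `C`, keeps the finite intersection
property (replace `A ∩ B` by `A` and `B` in a finite subfamily) and keeps the intersection
empty, so by maximality `A ∩ B` already lies in `𝒟 C`.
-/

theorem FIP.insert_inter {α : Type*} {D : Set (Set α)} (hD : FIP D) {A B : Set α}
    (hA : A ∈ D) (hB : B ∈ D) : FIP (insert (A ∩ B) D) := by
  intro F hF hFfin
  have hsub : insert A (insert B (F \ {A ∩ B})) ⊆ D := by
    rintro s (rfl | rfl | ⟨hsF, hsAB⟩)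
    · exact hA
    · exact hB
    · exact (hF hsF).resolve_left hsAB
  obtain ⟨y, hy⟩ := hD _ hsub (hFfin.sdiff.insert B |>.insert A)
  refine ⟨y, fun s hsF => ?_⟩
  by_cases hsAB : s = A ∩ B
  · exact hsAB ▸ ⟨hy A (.inl rfl), hy B (.inr (.inl rfl))⟩
  · exact hy s (.inr (.inr ⟨hsF, hsAB⟩))

namespace IsMaxFIPFamily

variable {X : Type*} [TopologicalSpace X] {C : Set X} {D : Set (Set X)}

theorem inter_mem (h : IsMaxFIPFamily C D) {A B : Set X} (hA : A ∈ D) (hB : B ∈ D) :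
    A ∩ B ∈ D := by
  obtain ⟨hclosed, hfip, hempty, hmax⟩ := h
  have hinsert : insert (A ∩ B) D = D := by
    refine hmax _ ?_ (hfip.insert_inter hA hB) ?_ (subset_insert _ _)
    · rintro s (rfl | hs)
      · exact ⟨(hclosed A hA).1.inter (hclosed B hB).1,
          inter_subset_left.trans (hclosed A hA).2⟩
      · exact hclosed s hs
    · rw [sInter_insert, hempty, inter_empty]
  exact hinsert ▸ mem_insert _ _

theorem nonempty [Nonempty X] (h : IsMaxFIPFamily C D) : D.Nonempty := by
  rw [nonempty_iff_ne_empty]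
  rintro rfl
  simpa using h.2.2.1

end IsMaxFIPFamily

section OPOpens

variable {X : Type*} [TopologicalSpace X] {𝒟 : Set X → Set (Set X)}

theorem isOpen_preimage_some_of_mem_opOpens {U : Set (Option X)} (hU : U ∈ OPOpens 𝒟) :
    IsOpen (some ⁻¹' U) :=
  hU.elim And.right fun h => h.2.1

theorem univ_mem_opOpens
    (h𝒟 : ∀ x : X, IsMaxFIPFamily (connectedComponent x) (𝒟 (connectedComponent x))) :
    univ ∈ OPOpens 𝒟 := by
  refine .inr ⟨mem_univ _, isOpen_univ, fun x => ?_⟩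
  have : Nonempty X := ⟨x⟩
  obtain ⟨A, hA⟩ := (h𝒟 x).nonempty
  exact ⟨A, hA, subset_univ _⟩

theorem inter_mem_opOpens
    (h𝒟 : ∀ x : X, IsMaxFIPFamily (connectedComponent x) (𝒟 (connectedComponent x)))
    {U V : Set (Option X)} (hU : U ∈ OPOpens 𝒟) (hV : V ∈ OPOpens 𝒟) :
    U ∩ V ∈ OPOpens 𝒟 := by
  have hopen : IsOpen (some ⁻¹' (U ∩ V)) :=
    (isOpen_preimage_some_of_mem_opOpens hU).inter (isOpen_preimage_some_of_mem_opOpens hV)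
  rcases hU with ⟨hUp, -⟩ | ⟨hUp, -, hUD⟩
  · exact .inl ⟨fun h => hUp h.1, hopen⟩
  rcases hV with ⟨hVp, -⟩ | ⟨hVp, -, hVD⟩
  · exact .inl ⟨fun h => hVp h.2, hopen⟩
  refine .inr ⟨⟨hUp, hVp⟩, hopen, fun x => ?_⟩
  obtain ⟨A, hA, hAU⟩ := hUD x
  obtain ⟨B, hB, hBV⟩ := hVD x
  refine ⟨A ∩ B, (h𝒟 x).inter_mem hA hB, ?_⟩
  rw [image_inter (Option.some_injective X)]
  exact inter_subset_inter hAU hBV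

theorem sUnion_mem_opOpens {S : Set (Set (Option X))} (hS : S ⊆ OPOpens 𝒟) :
    ⋃₀ S ∈ OPOpens 𝒟 := by
  have hopen : IsOpen (some ⁻¹' ⋃₀ S) := by
    rw [preimage_sUnion]
    exact isOpen_biUnion fun U hU => isOpen_preimage_some_of_mem_opOpens (hS hU)
  by_cases hp : none ∈ ⋃₀ S
  · obtain ⟨U, hUS, hpU⟩ := hp
    obtain ⟨hpU', -⟩ | ⟨-, -, hUD⟩ := hS hUS
    · exact absurd hpU hpU'
    refine .inr ⟨⟨U, hUS, hpU⟩, hopen, fun x => ?_⟩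
    obtain ⟨A, hA, hAU⟩ := hUD x
    exact ⟨A, hA, hAU.trans (subset_sUnion_of_mem hUS)⟩
  · exact .inl ⟨hp, hopen⟩

end OPOpens

theorem stmt_8_general {X : Type*} [TopologicalSpace X] (𝒟 : Set X → Set (Set X))
    (h𝒟 : ∀ x : X, IsMaxFIPFamily (connectedComponent x) (𝒟 (connectedComponent x))) :
    Set.univ ∈ OPOpens 𝒟 ∧
    (∀ U ∈ OPOpens 𝒟, ∀ V ∈ OPOpens 𝒟, U ∩ V ∈ OPOpens 𝒟) ∧
    (∀ S ⊆ OPOpens 𝒟, ⋃₀ S ∈ OPOpens 𝒟) :=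
  ⟨univ_mem_opOpens h𝒟, fun _ hU _ hV => inter_mem_opOpens h𝒟 hU hV,
    fun _ hS => sUnion_mem_opOpens hS⟩

/-- The collection `OPOpens 𝒟` forms a topology on `Y = X ∪ {p}`: it contains the
whole space and is closed under pairwise intersections and arbitrary unions. -/
theorem stmt_8 {X : Type*} [TopologicalSpace X] (𝒟 : Set X → Set (Set X))
    (hnc : ∀ x : X, ¬ IsCompact (connectedComponent x))
    (h𝒟 : ∀ x : X, IsMaxFIPFamily (connectedComponent x) (𝒟 (connectedComponent x))) :
    Set.univ ∈ OPOpens 𝒟 ∧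
    (∀ U ∈ OPOpens 𝒟, ∀ V ∈ OPOpens 𝒟, U ∩ V ∈ OPOpens 𝒟) ∧
    (∀ S ⊆ OPOpens 𝒟, ⋃₀ S ∈ OPOpens 𝒟) :=
  stmt_8_general 𝒟 h𝒟
end

section
/- With Y = X ∪ {p} topologized as in the one-point connectification construction (opens are: open sets of X, together with sets U containing p with U ∩ X open in X and U containing an element of D(C) for each component C), the subspace topology that Y induces on X coincides with the original topology of X. -/
open Set

theorem OPOpens.isOpen_preimage_some {X : Type*} [TopologicalSpace X]
    {𝒟 : Set X → Set (Set X)} {U : Set (Option X)} (hU : U ∈ OPOpens 𝒟) :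
    IsOpen (some ⁻¹' U) := by
  rcases hU with ⟨-, hU⟩ | ⟨-, hU, -⟩ <;> exact hU

theorem OPOpens.image_some_mem {X : Type*} [TopologicalSpace X]
    (𝒟 : Set X → Set (Set X)) {s : Set X} (hs : IsOpen s) :
    some '' s ∈ OPOpens 𝒟 := by
  refine Or.inl ⟨fun ⟨x, _, hx⟩ => Option.some_ne_none x hx, ?_⟩
  rwa [preimage_image_eq _ (Option.some_injective X)]

theorem stmt_9_general {X : Type*} [tX : TopologicalSpace X] (𝒟 : Set X → Set (Set X))
    (tY : TopologicalSpace (Option X))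
    (hopen : ∀ U : Set (Option X), @IsOpen _ tY U ↔ U ∈ OPOpens 𝒟) :
    TopologicalSpace.induced (some : X → Option X) tY = tX := by
  ext s
  rw [isOpen_induced_iff]
  constructor
  · rintro ⟨U, hU, rfl⟩
    exact OPOpens.isOpen_preimage_some ((hopen U).1 hU)
  · intro hs
    exact ⟨some '' s, (hopen _).2 (OPOpens.image_some_mem 𝒟 hs),
      preimage_image_eq _ (Option.some_injective X)⟩

/-- The topology that `Y = X ∪ {p}` induces on `X` coincides with the original
topology of `X`. -/
theorem stmt_9 {X : Type*} [tX : TopologicalSpace X] (𝒟 : Set X → Set (Set X))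
    (hnc : ∀ x : X, ¬ IsCompact (connectedComponent x))
    (h𝒟 : ∀ x : X, IsMaxFIPFamily (connectedComponent x) (𝒟 (connectedComponent x)))
    (tY : TopologicalSpace (Option X))
    (hopen : ∀ U : Set (Option X), @IsOpen _ tY U ↔ U ∈ OPOpens 𝒟) :
    TopologicalSpace.induced (some : X → Option X) tY = tX :=
  stmt_9_general (tX := tX) 𝒟 tY hopen
end

section
/- The one-point connectification Y = X ∪ {p} is connected: any clopen subset of Y containing p must contain every component of X, hence equals Y. -/
open Set

/-- The one-point connectification `Y = X ∪ {p}` is connected. -/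
theorem stmt_11 {X : Type*} [TopologicalSpace X] (𝒟 : Set X → Set (Set X))
    (hnc : ∀ x : X, ¬ IsCompact (connectedComponent x))
    (h𝒟 : ∀ x : X, IsMaxFIPFamily (connectedComponent x) (𝒟 (connectedComponent x)))
    (tY : TopologicalSpace (Option X))
    (hopen : ∀ U : Set (Option X), @IsOpen _ tY U ↔ U ∈ OPOpens 𝒟) :
    @ConnectedSpace (Option X) tY := by
  -- Key claim: any clopen set containing `none` is the whole space.
  have key : ∀ S : Set (Option X), @IsOpen _ tY S → @IsClosed _ tY S → none ∈ S →
      S = univ := by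
    intro S hSo hSc hnS
    -- trace on X is open
    have hTo : IsOpen (some ⁻¹' S) := by
      rcases (hopen S).mp hSo with ⟨_, h⟩ | ⟨_, h, _⟩ <;> exact h
    -- trace on X is closed
    have hTc : IsClosed (some ⁻¹' S) := by
      have := (hopen Sᶜ).mp hSc.isOpen_compl
      rcases this with ⟨_, h⟩ | ⟨_, h, _⟩ <;>
        · rw [Set.preimage_compl] at h
          exact ⟨h⟩
    -- the family condition
    have hfam : ∀ x : X, ∃ A ∈ 𝒟 (connectedComponent x), some '' A ⊆ S := by
      rcases (hopen S).mp hSo with ⟨hn, _⟩ | ⟨_, _, h⟩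
      · exact absurd hnS hn
      · exact h
    ext y
    simp only [mem_univ, iff_true]
    cases y with
    | none => exact hnS
    | some x =>
      obtain ⟨A, hA, hAS⟩ := hfam x
      -- A is nonempty by FIP
      obtain ⟨a, ha⟩ : A.Nonempty := by
        have := (h𝒟 x).2.1 {A} (by simpa using hA) (Set.finite_singleton A)
        simpa using this
      have haC : a ∈ connectedComponent x := ((h𝒟 x).1 A hA).2 ha
      have haT : a ∈ some ⁻¹' S := hAS ⟨a, ha, rfl⟩
      have hsub : connectedComponent a ⊆ some ⁻¹' S :=
        IsClopen.connectedComponent_subset ⟨hTc, hTo⟩ haT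
      have : x ∈ connectedComponent a := by
        exact (connectedComponent_eq haC) ▸ mem_connectedComponent
      exact hsub this
  refine @ConnectedSpace.mk _ tY ⟨?_⟩ ⟨none⟩
  intro u v hu hv hcov ⟨a, _, hau⟩ ⟨b, _, hbv⟩
  by_contra hne
  have hdis : u ∩ v = ∅ := by
    rw [Set.not_nonempty_iff_eq_empty] at hne
    rw [← Set.univ_inter (u ∩ v)]; exact hne
  have hvc : v = uᶜ := by
    apply Set.eq_of_subset_of_subset
    · intro y hy hyu
      exact absurd (Set.eq_empty_iff_forall_notMem.mp hdis y) (by simp [hyu, hy])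
    · intro y hy
      rcases hcov (Set.mem_univ y) with h | h
      · exact absurd h hy
      · exact h
  have hucl : @IsClosed _ tY u := by rw [← isOpen_compl_iff, ← hvc]; exact hv
  have hvcl : @IsClosed _ tY v := by
    rw [← isOpen_compl_iff, hvc, compl_compl]; exact hu
  cases hcov (Set.mem_univ (none : Option X)) with
  | inl h =>
    have := key u hu hucl h
    have : b ∈ u ∩ v := ⟨this ▸ Set.mem_univ b, hbv⟩
    rw [hdis] at this; exact this
  | inr h =>
    have := key v hv hvcl h
    have : a ∈ u ∩ v := ⟨hau, this ▸ Set.mem_univ a⟩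
    rw [hdis] at this; exact this
end

section
/- If X is a locally connected regular Hausdorff space with no compact component, then the one-point connectification Y = X ∪ {p} (with the topology defined via maximal FIP families D(C) of closed subsets with empty intersection for each component C) is Hausdorff. -/
open Set

/-!
Points of `X` are separated inside the open copy of `X`. To separate `p` from `z`, pick
`A ∈ D(C)` missing `z`, where `C` is the component of `z` (possible as `⋂ D(C) = ∅`), and
disjoint open `u ∋ z`, `v ⊇ A` by regularity. Since `C` is clopen, `p` together with
`(X \ C) ∪ v` is open: it contains `A` for `C`, and every member of `D(C')` for `C' ≠ C`.
Its complement contains `u ∩ C`.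
-/

lemma disjoint_insert_none_image_some {X : Type*} {u v : Set X} (huv : Disjoint u v) :
    Disjoint (insert none (some '' v)) (some '' u) := by
  rw [disjoint_insert_left, disjoint_image_iff (Option.some_injective X)]
  exact ⟨by simp, huv.symm⟩

section OnePointConnectification

variable {X : Type*} [TopologicalSpace X] {𝒟 : Set X → Set (Set X)}

lemma image_some_mem_OPOpens {u : Set X} (hu : IsOpen u) : some '' u ∈ OPOpens 𝒟 :=
  Or.inl ⟨by simp, by rwa [(Option.some_injective X).preimage_image]⟩

lemma insert_none_image_some_mem_OPOpens {v : Set X} (hv : IsOpen v)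
    (h𝒟v : ∀ x, ∃ A ∈ 𝒟 (connectedComponent x), A ⊆ v) :
    insert none (some '' v) ∈ OPOpens 𝒟 := by
  have hpre : some ⁻¹' insert none (some '' v) = v := by ext; simp
  refine Or.inr ⟨mem_insert _ _, by rwa [hpre], fun x => ?_⟩
  obtain ⟨A, hA, hAv⟩ := h𝒟v x
  exact ⟨A, hA, (image_mono hAv).trans (subset_insert _ _)⟩

lemma exists_OPOpens_separating_some_some [T2Space X] {y z : X} (hyz : y ≠ z) :
    ∃ U ∈ OPOpens 𝒟, ∃ V ∈ OPOpens 𝒟, some y ∈ U ∧ some z ∈ V ∧ Disjoint U V := by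
  obtain ⟨u, v, hu, hv, hyu, hzv, huv⟩ := t2_separation hyz
  exact ⟨_, image_some_mem_OPOpens hu, _, image_some_mem_OPOpens hv, mem_image_of_mem _ hyu,
    mem_image_of_mem _ hzv, (disjoint_image_iff (Option.some_injective X)).2 huv⟩

lemma exists_OPOpens_separating_none_some [RegularSpace X] [LocallyConnectedSpace X]
    (h𝒟sub : ∀ x, ∀ A ∈ 𝒟 (connectedComponent x), IsClosed A ∧ A ⊆ connectedComponent x)
    (h𝒟empty : ∀ x, ⋂₀ 𝒟 (connectedComponent x) = ∅) (z : X) :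
    ∃ U ∈ OPOpens 𝒟, ∃ V ∈ OPOpens 𝒟, none ∈ U ∧ some z ∈ V ∧ Disjoint U V := by
  set C := connectedComponent z
  obtain ⟨A, hA, hzA⟩ := sInter_eq_empty_iff.1 (h𝒟empty z) z
  obtain ⟨u, v, hu, hv, hzu, hAv, huv⟩ : SeparatedNhds {z} A := by
    rw [separatedNhds_iff_disjoint, nhdsSet_singleton]
    exact disjoint_nhds_nhdsSet.2 (by rwa [(h𝒟sub z A hA).1.closure_eq])
  have h𝒟v : ∀ x, ∃ A ∈ 𝒟 (connectedComponent x), A ⊆ Cᶜ ∪ v := by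
    intro x
    by_cases hxz : connectedComponent x = C
    · exact ⟨A, hxz ▸ hA, hAv.trans subset_union_right⟩
    · obtain ⟨A', hA', -⟩ := sInter_eq_empty_iff.1 (h𝒟empty x) x
      refine ⟨A', hA', (h𝒟sub x A' hA').2.trans (subset_union_of_subset_left ?_ _)⟩
      exact subset_compl_iff_disjoint_right.2 (connectedComponent_disjoint hxz)
  have huC : Disjoint (u ∩ C) (Cᶜ ∪ v) :=
    disjoint_union_right.2 ⟨disjoint_compl_right.mono_left inter_subset_right,
      huv.mono_left inter_subset_left⟩
  exact ⟨_, insert_none_image_some_mem_OPOpens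
      (isClosed_connectedComponent.isOpen_compl.union hv) h𝒟v,
    _, image_some_mem_OPOpens (hu.inter isOpen_connectedComponent), mem_insert _ _,
    mem_image_of_mem _ ⟨hzu rfl, mem_connectedComponent⟩, disjoint_insert_none_image_some huC⟩

end OnePointConnectification

theorem stmt_12_general {X : Type*} [TopologicalSpace X] [T3Space X] [LocallyConnectedSpace X]
    (𝒟 : Set X → Set (Set X))
    (h𝒟 : ∀ x : X, IsMaxFIPFamily (connectedComponent x) (𝒟 (connectedComponent x)))
    (tY : TopologicalSpace (Option X))
    (hopen : ∀ U : Set (Option X), @IsOpen _ tY U ↔ U ∈ OPOpens 𝒟) :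
    @T2Space (Option X) tY := by
  have h𝒟sub x := (h𝒟 x).1
  have h𝒟empty x := (h𝒟 x).2.2.1
  refine @T2Space.mk _ tY fun a b hab => ?_
  suffices ∃ U ∈ OPOpens 𝒟, ∃ V ∈ OPOpens 𝒟, a ∈ U ∧ b ∈ V ∧ Disjoint U V by
    obtain ⟨U, hU, V, hV, haU, hbV, hUV⟩ := this
    exact ⟨U, V, (hopen U).2 hU, (hopen V).2 hV, haU, hbV, hUV⟩
  rcases a with _ | y <;> rcases b with _ | z
  · exact absurd rfl hab
  · exact exists_OPOpens_separating_none_some h𝒟sub h𝒟empty z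
  · obtain ⟨U, hU, V, hV, hnU, hyV, hUV⟩ := exists_OPOpens_separating_none_some h𝒟sub h𝒟empty y
    exact ⟨V, hV, U, hU, hyV, hnU, hUV.symm⟩
  · exact exists_OPOpens_separating_some_some (fun hyz => hab (congrArg some hyz))

/-- If `X` is a locally connected regular Hausdorff space with no compact component,
then the one-point connectification `Y = X ∪ {p}` is Hausdorff. -/
theorem stmt_12 {X : Type*} [TopologicalSpace X] [T3Space X] [LocallyConnectedSpace X]
    (𝒟 : Set X → Set (Set X))
    (hnc : ∀ x : X, ¬ IsCompact (connectedComponent x))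
    (h𝒟 : ∀ x : X, IsMaxFIPFamily (connectedComponent x) (𝒟 (connectedComponent x)))
    (tY : TopologicalSpace (Option X))
    (hopen : ∀ U : Set (Option X), @IsOpen _ tY U ↔ U ∈ OPOpens 𝒟) :
    @T2Space (Option X) tY :=
  stmt_12_general 𝒟 h𝒟 tY hopen
end

section
/- If X is a locally connected normal space with no compact component, then the one-point connectification Y = X ∪ {p} (topologized via the maximal FIP families D(C)) is a normal space: any two disjoint closed subsets of Y can be separated by disjoint open sets of Y. -/
open Set

open Topology

/- Proof idea. By symmetry `p ∉ G`; then `Y \ G` is a neighbourhood of `p`, so each component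
`C` contains a member `A_C ∈ D(C)` missing `G`. Separating `(F ∩ X) ∪ A_C` from `G ∩ X` in `X` by
disjoint open `U_C`, `V_C` and gluing `{p} ∪ ⋃_C (C ∩ U_C)` and `⋃_C (C ∩ V_C)` (written below as
`{y | y ∈ U (connectedComponent y)}`) gives the separation in `Y`; the glued sets are open because
components of a locally connected space are open. -/

theorem isOpen_setOf_mem_connectedComponent {X : Type*} [TopologicalSpace X]
    [LocallyConnectedSpace X] {U : Set X → Set X} (hU : ∀ C, IsOpen (U C)) :
    IsOpen {y | y ∈ U (connectedComponent y)} := by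
  refine isOpen_iff_mem_nhds.2 fun y hy => ?_
  filter_upwards [isOpen_connectedComponent.mem_nhds mem_connectedComponent,
    (hU _).mem_nhds hy] with z hz hzU
  rwa [← connectedComponent_eq hz]

section OnePointConnectification

variable {X : Type*} [TopologicalSpace X] {𝒟 : Set X → Set (Set X)}
  {tY : TopologicalSpace (Option X)}

theorem continuous_some_of_forall_isOpen_iff
    (hopen : ∀ U : Set (Option X), IsOpen[tY] U ↔ U ∈ OPOpens 𝒟) :
    Continuous[_, tY] some :=
  ⟨fun U hU => by rcases (hopen U).1 hU with ⟨-, h⟩ | ⟨-, h, -⟩ <;> exact h⟩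

theorem isOpen_image_some_of_forall_isOpen_iff
    (hopen : ∀ U : Set (Option X), IsOpen[tY] U ↔ U ∈ OPOpens 𝒟) {W : Set X} (hW : IsOpen W) :
    IsOpen[tY] (some '' W) := by
  refine (hopen _).2 (Or.inl ⟨by simp, ?_⟩)
  rwa [(Option.some_injective X).preimage_image]

theorem isOpen_insert_none_image_some_of_forall_isOpen_iff
    (hopen : ∀ U : Set (Option X), IsOpen[tY] U ↔ U ∈ OPOpens 𝒟) {W : Set X} (hW : IsOpen W)
    (h𝒟W : ∀ x, ∃ A ∈ 𝒟 (connectedComponent x), A ⊆ W) :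
    IsOpen[tY] (insert none (some '' W)) := by
  refine (hopen _).2 (Or.inr ⟨mem_insert _ _, ?_, fun x => ?_⟩)
  · convert hW using 1
    ext
    simp
  · obtain ⟨A, hA, hAW⟩ := h𝒟W x
    exact ⟨A, hA, (image_mono hAW).trans (subset_insert _ _)⟩

-- On a set `C` that is not a component, `A = ∅` is a harmless choice.
theorem exists_isClosed_subset_compl_preimage_of_none_notMem
    (h𝒟 : ∀ x, ∀ A ∈ 𝒟 (connectedComponent x), IsClosed A ∧ A ⊆ connectedComponent x)
    (hopen : ∀ U : Set (Option X), IsOpen[tY] U ↔ U ∈ OPOpens 𝒟) {G : Set (Option X)}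
    (hG : IsClosed[tY] G) (hnG : none ∉ G) (C : Set X) :
    ∃ A, IsClosed A ∧ A ⊆ (some ⁻¹' G)ᶜ ∧ ∀ x, connectedComponent x = C → A ∈ 𝒟 C ∧ A ⊆ C := by
  by_cases hC : ∃ x, connectedComponent x = C
  · obtain ⟨x, rfl⟩ := hC
    rcases (hopen Gᶜ).1 hG.isOpen_compl with ⟨hn, -⟩ | ⟨-, -, hG𝒟⟩
    · exact absurd hnG hn
    obtain ⟨A, hA, hAG⟩ := hG𝒟 x
    exact ⟨A, (h𝒟 x A hA).1, image_subset_iff.1 hAG, fun _ _ => ⟨hA, (h𝒟 x A hA).2⟩⟩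
  · exact ⟨∅, isClosed_empty, empty_subset _, fun x hx => absurd ⟨x, hx⟩ hC⟩

theorem exists_separation_of_none_notMem [NormalSpace X] [LocallyConnectedSpace X]
    (h𝒟 : ∀ x, ∀ A ∈ 𝒟 (connectedComponent x), IsClosed A ∧ A ⊆ connectedComponent x)
    (hopen : ∀ U : Set (Option X), IsOpen[tY] U ↔ U ∈ OPOpens 𝒟) {F G : Set (Option X)}
    (hF : IsClosed[tY] F) (hG : IsClosed[tY] G) (hFG : Disjoint F G) (hnG : none ∉ G) :
    ∃ U V : Set (Option X), IsOpen[tY] U ∧ IsOpen[tY] V ∧ F ⊆ U ∧ G ⊆ V ∧ Disjoint U V := by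
  have hsome := continuous_some_of_forall_isOpen_iff hopen
  choose A hAclosed hAG hA𝒟 using
    exists_isClosed_subset_compl_preimage_of_none_notMem h𝒟 hopen hG hnG
  have hsep : ∀ C, SeparatedNhds (some ⁻¹' F ∪ A C) (some ⁻¹' G) := fun C =>
    normal_separation ((hF.preimage hsome).union (hAclosed C)) (hG.preimage hsome)
      (disjoint_union_left.2 ⟨hFG.preimage some, subset_compl_iff_disjoint_right.1 (hAG C)⟩)
  choose U V hU hV hFU hGV hUV using hsep
  refine ⟨insert none (some '' {y | y ∈ U (connectedComponent y)}),
    some '' {y | y ∈ V (connectedComponent y)},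
    isOpen_insert_none_image_some_of_forall_isOpen_iff hopen
      (isOpen_setOf_mem_connectedComponent hU) fun x => ⟨A (connectedComponent x), ?_⟩,
    isOpen_image_some_of_forall_isOpen_iff hopen (isOpen_setOf_mem_connectedComponent hV),
    ?_, ?_, ?_⟩
  · obtain ⟨hA, hAC⟩ := hA𝒟 _ x rfl
    refine ⟨hA, fun a ha => ?_⟩
    change a ∈ U (connectedComponent a)
    rw [← connectedComponent_eq (hAC ha)]
    exact hFU _ (Or.inr ha)
  · rintro (_ | x) hx
    · exact mem_insert _ _
    · exact mem_insert_of_mem _ (mem_image_of_mem _ (hFU _ (Or.inl hx)))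
  · rintro (_ | x) hx
    · exact absurd hx hnG
    · exact mem_image_of_mem _ (hGV _ hx)
  · refine disjoint_insert_left.2 ⟨by simp, ?_⟩
    rw [disjoint_image_iff (Option.some_injective X)]
    exact disjoint_left.2 fun y hyU hyV => disjoint_left.1 (hUV _) hyU hyV

end OnePointConnectification

theorem stmt_13_general {X : Type*} [TopologicalSpace X] [NormalSpace X] [LocallyConnectedSpace X]
    (𝒟 : Set X → Set (Set X))
    (h𝒟 : ∀ x : X, IsMaxFIPFamily (connectedComponent x) (𝒟 (connectedComponent x)))
    (tY : TopologicalSpace (Option X))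
    (hopen : ∀ U : Set (Option X), @IsOpen _ tY U ↔ U ∈ OPOpens 𝒟) :
    ∀ F G : Set (Option X), @IsClosed _ tY F → @IsClosed _ tY G → Disjoint F G →
      ∃ U V : Set (Option X), @IsOpen _ tY U ∧ @IsOpen _ tY V ∧
        F ⊆ U ∧ G ⊆ V ∧ Disjoint U V := by
  intro F G hF hG hFG
  have h𝒟' := fun x => (h𝒟 x).1
  by_cases hnG : none ∈ G
  · obtain ⟨V, U, hV, hU, hGV, hFU, hVU⟩ := exists_separation_of_none_notMem h𝒟' hopen hG hF
      hFG.symm fun hnF => disjoint_left.1 hFG hnF hnG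
    exact ⟨U, V, hU, hV, hFU, hGV, hVU.symm⟩
  · exact exists_separation_of_none_notMem h𝒟' hopen hF hG hFG hnG

/-- If `X` is a locally connected normal space with no compact component, then the
one-point connectification `Y = X ∪ {p}` is normal: disjoint closed sets in `Y`
are separated by disjoint open sets in `Y`. -/
theorem stmt_13 {X : Type*} [TopologicalSpace X] [NormalSpace X] [LocallyConnectedSpace X]
    (𝒟 : Set X → Set (Set X))
    (hnc : ∀ x : X, ¬ IsCompact (connectedComponent x))
    (h𝒟 : ∀ x : X, IsMaxFIPFamily (connectedComponent x) (𝒟 (connectedComponent x)))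
    (tY : TopologicalSpace (Option X))
    (hopen : ∀ U : Set (Option X), @IsOpen _ tY U ↔ U ∈ OPOpens 𝒟) :
    ∀ F G : Set (Option X), @IsClosed _ tY F → @IsClosed _ tY G → Disjoint F G →
      ∃ U V : Set (Option X), @IsOpen _ tY U ∧ @IsOpen _ tY V ∧
        F ⊆ U ∧ G ⊆ V ∧ Disjoint U V :=
  stmt_13_general 𝒟 h𝒟 tY hopen
end

section
/- If a topological space X has a connected T1 extension Y in which X is a dense proper subspace with Y \ X a single point, then X has no connected component that is both compact and open in X. -/
/-- If a space `X` has a connected Hausdorff (hence T1) one-point extension `Y`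
(with `X` dense and `Y \ X` a single point), then `X` has no connected component
that is both compact and open in `X`. -/
theorem stmt_16 {Y : Type*} [TopologicalSpace Y] [T2Space Y] [ConnectedSpace Y]
    (X : Set Y) (hd : Dense X) (p : Y) (hp : Xᶜ = {p}) :
    ∀ x : X, IsCompact (connectedComponent x) → ¬ IsOpen (connectedComponent x) := by
  intro x hC hO
  have hXopen : IsOpen X := by
    rw [← compl_compl X, hp]
    exact isClosed_singleton.isOpen_compl
  set S : Set Y := Subtype.val '' connectedComponent x with hS
  have hSclosed : IsClosed S := (hC.image continuous_subtype_val).isClosed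
  have hSopen : IsOpen S := hXopen.isOpenMap_subtype_val _ hO
  rcases isClopen_iff.mp ⟨hSclosed, hSopen⟩ with h | h
  · have : (x : Y) ∈ S := ⟨x, mem_connectedComponent, rfl⟩
    simp [h] at this
  · have hpS : p ∈ S := h ▸ Set.mem_univ p
    rcases hpS with ⟨y, _, hy⟩
    have : p ∈ Xᶜ := by rw [hp]; rfl
    exact this (hy ▸ y.2)
end
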